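/- For every real p ≥ 3 there exists a constant C > 0 such that for all real a, b: | |a+b|^p − |a|^p − |b|^p − p·a·b·(|a|^{p−2} + |b|^{p−2}) | ≤ C·(|a|^{p−2}·b^2 + a^2·|b|^{p−2}). -/

import Mathlib

/-!
Both sides are symmetric in `(a, b)`, invariant under `(a, b) ↦ (-a, -b)` and positively
homogeneous of degree `p`, so it suffices to bound them at `a = 1`, `|b| = |t| ≤ 1`. There
`(1 + t)^p - 1 - p t = O(t²)` by the mean value theorem, applied once to `x^(p-1)` on `[0, 2]` to
bound the derivative `p ((1 + s)^(p-1) - 1)` by `O(|s|)` and once more on `[0, t]`; the remaining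
terms `|t|^p`, `|t|^(p-1)` are at most `|t|^(p-2)` because `|t| ≤ 1`.
-/

open Real Set

theorem Real.abs_sign_le_one (x : ℝ) : |sign x| ≤ 1 := by
  rcases sign_apply_eq x with h | h | h <;> simp [h]

theorem Real.sign_mul_of_pos {c : ℝ} (hc : 0 < c) (a : ℝ) : sign (c * a) = sign a := by
  rcases lt_trichotomy a 0 with h | rfl | h
  · rw [sign_of_neg h, sign_of_neg (mul_neg_of_pos_of_neg hc h)]
  · rw [mul_zero]
  · rw [sign_of_pos h, sign_of_pos (mul_pos hc h)]

theorem Real.abs_mul_rpow_of_pos {c : ℝ} (hc : 0 < c) (a q : ℝ) :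
    |c * a| ^ q = c ^ q * |a| ^ q := by
  rw [abs_mul, abs_of_pos hc, mul_rpow hc.le (abs_nonneg a)]

theorem Real.abs_rpow_sub_rpow_le {q R x y : ℝ} (hq : 1 ≤ q) (hx : x ∈ Icc 0 R)
    (hy : y ∈ Icc 0 R) :
    |x ^ q - y ^ q| ≤ q * R ^ (q - 1) * |x - y| := by
  refine (convex_Icc 0 R).norm_image_sub_le_of_norm_hasDerivWithin_le
    (fun z _ => (hasDerivAt_rpow_const (Or.inr hq)).hasDerivWithinAt) (fun z hz => ?_) hy hx
  obtain ⟨hz0, hzR⟩ := hz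
  rw [norm_mul, Real.norm_of_nonneg (by linarith), Real.norm_of_nonneg (rpow_nonneg hz0 _)]
  gcongr

theorem Real.abs_one_add_rpow_sub_le {p t : ℝ} (hp : 2 ≤ p) (ht : |t| ≤ 1) :
    |(1 + t) ^ p - 1 - p * t| ≤ p * (p - 1) * 2 ^ (p - 2) * t ^ 2 := by
  have hderiv (s : ℝ) : HasDerivAt (fun s => (1 + s) ^ p - 1 - p * s)
      (p * ((1 + s) ^ (p - 1) - 1)) s := by
    have h : HasDerivAt (fun s => (1 + s) ^ p - 1 - p * s)
        (1 * p * (1 + s) ^ (p - 1) - p * 1) s :=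
      ((((hasDerivAt_id s).const_add 1).rpow_const (Or.inr (by linarith))).sub_const 1).sub
        ((hasDerivAt_id s).const_mul p)
    convert h using 1
    ring
  have hbound : ∀ s ∈ uIcc 0 t,
      ‖p * ((1 + s) ^ (p - 1) - 1)‖ ≤ p * (p - 1) * 2 ^ (p - 2) * |t| := by
    intro s hs
    have hst : |s| ≤ |t| := by
      rcases mem_uIcc.mp hs with h | h <;> rw [abs_le] <;> constructor <;>
        linarith [neg_abs_le t, le_abs_self t]
    have hs1 : 1 + s ∈ Icc (0 : ℝ) 2 := by
      constructor <;> linarith [abs_le.mp (hst.trans ht)]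
    have h := abs_rpow_sub_rpow_le (q := p - 1) (by linarith) hs1
      (by norm_num : (1 : ℝ) ∈ Icc 0 2)
    rw [one_rpow, add_sub_cancel_left, show p - 1 - 1 = p - 2 by ring] at h
    rw [norm_mul, Real.norm_of_nonneg (by linarith), Real.norm_eq_abs, mul_assoc p, mul_assoc p]
    have : 0 ≤ p - 1 := by linarith
    gcongr
    exact h.trans (by gcongr)
  have h := (convex_uIcc 0 t).norm_image_sub_le_of_norm_hasDerivWithin_le
    (fun s _ => (hderiv s).hasDerivWithinAt) hbound left_mem_uIcc right_mem_uIcc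
  simpa [← sq_abs t, sq, mul_assoc] using h

noncomputable def absRpowRemainder (p a b : ℝ) : ℝ :=
  |a + b| ^ p - |a| ^ p - |b| ^ p -
    p * (sign a * |a| ^ (p - 1) * b + a * sign b * |b| ^ (p - 1))

noncomputable def absRpowWeight (p a b : ℝ) : ℝ := |a| ^ (p - 2) * b ^ 2 + a ^ 2 * |b| ^ (p - 2)

theorem absRpowRemainder_comm (p a b : ℝ) : absRpowRemainder p a b = absRpowRemainder p b a := by
  rw [absRpowRemainder, absRpowRemainder, add_comm b a]
  ring

theorem absRpowWeight_comm (p a b : ℝ) : absRpowWeight p a b = absRpowWeight p b a := by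
  rw [absRpowWeight, absRpowWeight]
  ring

theorem absRpowRemainder_neg_neg (p a b : ℝ) :
    absRpowRemainder p (-a) (-b) = absRpowRemainder p a b := by
  simp only [absRpowRemainder, ← neg_add, abs_neg, sign_neg]
  ring

theorem absRpowWeight_neg_neg (p a b : ℝ) : absRpowWeight p (-a) (-b) = absRpowWeight p a b := by
  rw [absRpowWeight, absRpowWeight, abs_neg, abs_neg, neg_sq, neg_sq]

theorem absRpowRemainder_mul_mul {c : ℝ} (hc : 0 < c) (p a b : ℝ) :
    absRpowRemainder p (c * a) (c * b) = c ^ p * absRpowRemainder p a b := by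
  have hcp : c ^ p = c ^ (p - 1) * c := by rw [← rpow_add_one hc.ne', sub_add_cancel]
  rw [absRpowRemainder, absRpowRemainder, ← mul_add]
  simp only [abs_mul_rpow_of_pos hc, sign_mul_of_pos hc, hcp]
  ring

theorem absRpowWeight_mul_mul {c : ℝ} (hc : 0 < c) (p a b : ℝ) :
    absRpowWeight p (c * a) (c * b) = c ^ p * absRpowWeight p a b := by
  have hcp : c ^ p = c ^ (p - 2) * c ^ 2 := by
    rw [← rpow_natCast, ← rpow_add hc]; norm_num
  rw [absRpowWeight, absRpowWeight, abs_mul_rpow_of_pos hc, abs_mul_rpow_of_pos hc, hcp]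
  ring

theorem abs_absRpowRemainder_one_le {p t : ℝ} (hp : 2 ≤ p) (ht : |t| ≤ 1) :
    |absRpowRemainder p 1 t| ≤ (p * (p - 1) * 2 ^ (p - 2) + p + 1) * absRpowWeight p 1 t := by
  set K := p * (p - 1) * 2 ^ (p - 2)
  have hK : 0 ≤ K := by
    have : 0 ≤ p - 1 := by linarith
    positivity
  have hpow_le {q : ℝ} (hq : q ≤ p) (hq2 : p - 2 ≤ q) : |t| ^ q ≤ |t| ^ (p - 2) :=
    rpow_le_rpow_of_exponent_ge' (abs_nonneg t) ht (by linarith) hq2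
  have hsign : |sign t * |t| ^ (p - 1)| ≤ |t| ^ (p - 2) := by
    rw [abs_mul, abs_of_nonneg (rpow_nonneg (abs_nonneg t) _)]
    exact (mul_le_of_le_one_left (rpow_nonneg (abs_nonneg t) _) (abs_sign_le_one t)).trans
      (hpow_le (by linarith) (by linarith))
  have hsplit : absRpowRemainder p 1 t =
      ((1 + t) ^ p - 1 - p * t) - |t| ^ p - p * (sign t * |t| ^ (p - 1)) := by
    simp only [absRpowRemainder, abs_of_nonneg (by linarith [neg_abs_le t] : 0 ≤ 1 + t), abs_one,
      one_rpow, sign_one]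
    ring
  have hweight : absRpowWeight p 1 t = t ^ 2 + |t| ^ (p - 2) := by
    simp [absRpowWeight]
  calc |absRpowRemainder p 1 t|
      ≤ |(1 + t) ^ p - 1 - p * t| + |t| ^ p + p * |sign t * |t| ^ (p - 1)| := by
        have h₁ := abs_sub ((1 + t) ^ p - 1 - p * t - |t| ^ p) (p * (sign t * |t| ^ (p - 1)))
        have h₂ := abs_sub ((1 + t) ^ p - 1 - p * t) (|t| ^ p)
        rw [abs_mul, abs_of_nonneg (by linarith : 0 ≤ p)] at h₁
        rw [abs_of_nonneg (rpow_nonneg (abs_nonneg t) p)] at h₂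
        rw [hsplit]
        linarith
    _ ≤ K * t ^ 2 + |t| ^ (p - 2) + p * |t| ^ (p - 2) := by
        have := abs_one_add_rpow_sub_le hp ht
        have := hpow_le le_rfl (by linarith)
        gcongr
    _ ≤ (K + p + 1) * absRpowWeight p 1 t := by
        rw [hweight]
        nlinarith [sq_nonneg t, rpow_nonneg (abs_nonneg t) (p - 2)]

theorem abs_absRpowRemainder_le_of_abs_le_of_pos {p a b : ℝ} (hp : 2 ≤ p) (ha : 0 < a)
    (hba : |b| ≤ a) :
    |absRpowRemainder p a b| ≤ (p * (p - 1) * 2 ^ (p - 2) + p + 1) * absRpowWeight p a b := by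
  have ht : |b / a| ≤ 1 := by rwa [abs_div, abs_of_pos ha, div_le_one ha]
  have hap : 0 ≤ a ^ p := rpow_nonneg ha.le p
  have hF := absRpowRemainder_mul_mul ha p 1 (b / a)
  have hW := absRpowWeight_mul_mul ha p 1 (b / a)
  rw [mul_one, mul_div_cancel₀ b ha.ne'] at hF hW
  rw [hF, hW, abs_mul, abs_of_nonneg hap, mul_left_comm]
  exact mul_le_mul_of_nonneg_left (abs_absRpowRemainder_one_le hp ht) hap

theorem abs_absRpowRemainder_le_of_abs_le {p a b : ℝ} (hp : 2 ≤ p) (hba : |b| ≤ |a|) :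
    |absRpowRemainder p a b| ≤ (p * (p - 1) * 2 ^ (p - 2) + p + 1) * absRpowWeight p a b := by
  rcases lt_trichotomy a 0 with ha | rfl | ha
  · rw [← absRpowRemainder_neg_neg, ← absRpowWeight_neg_neg]
    exact abs_absRpowRemainder_le_of_abs_le_of_pos hp (neg_pos.mpr ha)
      (by rwa [abs_neg, ← abs_of_neg ha])
  · obtain rfl : b = 0 := abs_nonpos_iff.mp (by simpa using hba)
    simp [absRpowRemainder, absRpowWeight, zero_rpow (by linarith : p ≠ 0)]
  · exact abs_absRpowRemainder_le_of_abs_le_of_pos hp ha (by rwa [← abs_of_pos ha])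

theorem abs_absRpowRemainder_le {p : ℝ} (hp : 2 ≤ p) (a b : ℝ) :
    |absRpowRemainder p a b| ≤ (p * (p - 1) * 2 ^ (p - 2) + p + 1) * absRpowWeight p a b := by
  rcases le_total |b| |a| with h | h
  · exact abs_absRpowRemainder_le_of_abs_le hp h
  · rw [absRpowRemainder_comm, absRpowWeight_comm]
    exact abs_absRpowRemainder_le_of_abs_le hp h

theorem stmt_5 (p : ℝ) (hp : 3 ≤ p) :
    ∃ C : ℝ, 0 < C ∧ ∀ a b : ℝ,
      |(|a + b| ^ p - |a| ^ p - |b| ^ p -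
          p * (Real.sign a * |a| ^ (p - 1) * b + a * Real.sign b * |b| ^ (p - 1)))| ≤
        C * (|a| ^ (p - 2) * b ^ 2 + a ^ 2 * |b| ^ (p - 2)) := by
  have hp2 : 2 ≤ p := by linarith
  refine ⟨p * (p - 1) * 2 ^ (p - 2) + p + 1, ?_, abs_absRpowRemainder_le hp2⟩
  have : 0 ≤ p - 1 := by linarith
  positivity
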